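/- arXiv:2004.10946 — 2 statements merged into one kernel-verified Lean document; each statement's English description precedes it below -/
import Mathlib

section
/- Let x_s, x_d ∈ ℝ² with midpoint w and ‖x_s − x_d‖ = 2d, d > 0. Let ψ ≥ 0, τ > 0, and t be reals with d < t, ψ + d ≤ t ≤ √(τ² + d²). Then the two-dimensional Lebesgue measure of the set {x ∈ ℝ² : ψ ≤ ‖x − w‖ ≤ τ and max(‖x_s − x‖, ‖x − x_d‖) > t} equals π(τ² − t²) + 2d√(t² − d²) + 2t²·arctan(d/√(t² − d²)). -/
open Real MeasureTheory Set Metric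

/-!
Every point lies within `‖x - w‖ + d` of both `x_s` and `x_d`, and by Apollonius' theorem every
point within `t` of both lies within `√(t² - d²) ≤ τ` of `w`. Hence the set is the disc of radius
`τ` about `w` minus the lens `B(x_s, t) ∩ B(x_d, t)`. A reflection moves the foci to `±(d, 0)`,
where by Fubini the vertical chord of the lens over the abscissa `x` has length
`2√(t² - (|x| + d)²)`, so the lens has area
`4 ∫_d^t √(t² - u²) du = πt² - 2d√(t² - d²) - 2t² arcsin (d / t)`.
-/

theorem sqrt_one_sub_div_sq {u t : ℝ} (ht : 0 < t) : √(1 - (u / t) ^ 2) = √(t ^ 2 - u ^ 2) / t := by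
  rw [show 1 - (u / t) ^ 2 = (t ^ 2 - u ^ 2) / t ^ 2 by field_simp, sqrt_div' _ (sq_nonneg t),
    sqrt_sq ht.le]

theorem arcsin_div_eq_arctan_div_sqrt {d t : ℝ} (hdt : |d| < t) :
    arcsin (d / t) = arctan (d / √(t ^ 2 - d ^ 2)) := by
  have ht : 0 < t := (abs_nonneg d).trans_lt hdt
  have hpos : 0 < √(t ^ 2 - d ^ 2) := sqrt_pos.2 (by nlinarith [sq_abs d, abs_nonneg d])
  have hdt' : d / t ∈ Ioo (-1) 1 := by
    rwa [mem_Ioo, ← abs_lt, abs_div, abs_of_pos ht, div_lt_one ht]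
  rw [arcsin_eq_arctan hdt', sqrt_one_sub_div_sq ht]
  field_simp

theorem hasDerivAt_mul_sqrt_sq_sub_sq_add_arcsin {t u : ℝ} (ht : 0 < t) (hu : u ∈ Ioo (-t) t) :
    HasDerivAt (fun u => (u * √(t ^ 2 - u ^ 2) + t ^ 2 * arcsin (u / t)) / 2)
      √(t ^ 2 - u ^ 2) u := by
  have hpos : 0 < t ^ 2 - u ^ 2 := by nlinarith [hu.1, hu.2]
  have hut : u / t ∈ Ioo (-1) 1 := by
    rw [mem_Ioo, lt_div_iff₀ ht, div_lt_iff₀ ht]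
    exact ⟨by linarith [hu.1], by linarith [hu.2]⟩
  have hsqrt : HasDerivAt (fun u => √(t ^ 2 - u ^ 2)) (-(2 * u) / (2 * √(t ^ 2 - u ^ 2))) u := by
    simpa using ((hasDerivAt_pow 2 u).const_sub (t ^ 2)).sqrt hpos.ne'
  have harcsin := (hasDerivAt_arcsin hut.1.ne' hut.2.ne).comp u ((hasDerivAt_id u).div_const t)
  refine ((((hasDerivAt_id u).mul hsqrt).add (harcsin.const_mul (t ^ 2))).div_const 2).congr_deriv
    ?_
  have hs : √(t ^ 2 - u ^ 2) ^ 2 = t ^ 2 - u ^ 2 := sq_sqrt hpos.le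
  rw [sqrt_one_sub_div_sq ht]
  field_simp
  simp only [id]
  linear_combination -hs

theorem integral_sqrt_sq_sub_sq {t d : ℝ} (ht : 0 < t) (hd : -t ≤ d) (hdt : d ≤ t) :
    ∫ u in d..t, √(t ^ 2 - u ^ 2)
      = (π / 2 * t ^ 2 - d * √(t ^ 2 - d ^ 2) - t ^ 2 * arcsin (d / t)) / 2 := by
  rw [intervalIntegral.integral_eq_sub_of_hasDerivAt_of_le hdt (by fun_prop)
    (fun u hu => hasDerivAt_mul_sqrt_sq_sub_sq_add_arcsin ht ⟨hd.trans_lt hu.1, hu.2⟩)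
    ((by fun_prop : Continuous fun u : ℝ => √(t ^ 2 - u ^ 2)).intervalIntegrable _ _)]
  simp [div_self ht.ne']
  ring

theorem volume_setOf_sq_le (c : ℝ) : volume {y : ℝ | y ^ 2 ≤ c} = ENNReal.ofReal (2 * √c) := by
  rcases le_or_gt 0 c with hc | hc
  · simp_rw [Real.sq_le hc, ← mem_Icc, ofPred_mem_eq, volume_Icc]
    ring_nf
  · have hempty : {y : ℝ | y ^ 2 ≤ c} = ∅ :=
      eq_empty_of_forall_notMem fun y hy => (hc.trans_le (sq_nonneg y)).not_ge hy
    simp [hempty, sqrt_eq_zero_of_nonpos hc.le]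

theorem integral_sqrt_sq_sub_sq_abs_add {d t : ℝ} (ht : 0 ≤ t) (hdt : d ≤ t) :
    ∫ x, √(t ^ 2 - (|x| + d) ^ 2) = 2 * ∫ u in d..t, √(t ^ 2 - u ^ 2) := by
  have hvanish : ∀ x ∈ Ioi (0 : ℝ) \ Ioc 0 (t - d), √(t ^ 2 - (x + d) ^ 2) = 0 := by
    rintro x ⟨hx, hx'⟩
    have : t - d < x := by simpa [mem_Ioi.mp hx] using hx'
    exact sqrt_eq_zero_of_nonpos (by nlinarith)
  rw [integral_comp_abs (f := fun x => √(t ^ 2 - (x + d) ^ 2)),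
    setIntegral_eq_of_subset_of_forall_sdiff_eq_zero measurableSet_Ioi Ioc_subset_Ioi_self hvanish,
    ← intervalIntegral.integral_of_le (by linarith)]
  simpa using intervalIntegral.integral_comp_add_right (a := 0) (b := t - d)
    (fun u => √(t ^ 2 - u ^ 2)) d

theorem volume_lens_prod {d t : ℝ} (hd : 0 ≤ d) (hdt : d ≤ t) :
    volume {q : ℝ × ℝ | (q.1 - d) ^ 2 + q.2 ^ 2 ≤ t ^ 2 ∧ (q.1 + d) ^ 2 + q.2 ^ 2 ≤ t ^ 2}
      = ENNReal.ofReal (4 * ∫ u in d..t, √(t ^ 2 - u ^ 2)) := by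
  set lens := {q : ℝ × ℝ | (q.1 - d) ^ 2 + q.2 ^ 2 ≤ t ^ 2 ∧ (q.1 + d) ^ 2 + q.2 ^ 2 ≤ t ^ 2}
  have hmeas : MeasurableSet lens := by measurability
  have hslice (x : ℝ) : Prod.mk x ⁻¹' lens = {y | y ^ 2 ≤ t ^ 2 - (|x| + d) ^ 2} := by
    ext y
    simp only [mem_preimage, mem_ofPred_eq]
    rcases abs_cases x with ⟨hx, hx0⟩ | ⟨hx, hx0⟩ <;> rw [hx] <;>
      exact ⟨fun h => by nlinarith [h.1, h.2], fun h => ⟨by nlinarith, by nlinarith⟩⟩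
  have hint : Integrable fun x : ℝ => 2 * √(t ^ 2 - (|x| + d) ^ 2) := by
    refine (by fun_prop : Continuous _).integrable_of_hasCompactSupport
      (HasCompactSupport.intro (isCompact_Icc (a := -(t - d)) (b := t - d)) fun x hx => ?_)
    have : t - d < |x| := by
      rw [mem_Icc, ← abs_le, not_le] at hx
      exact hx
    rw [sqrt_eq_zero_of_nonpos (by nlinarith [abs_nonneg x]), mul_zero]
  rw [Measure.volume_eq_prod, Measure.prod_apply hmeas]
  simp_rw [hslice, volume_setOf_sq_le]
  rw [← ofReal_integral_eq_lintegral_ofReal hint (ae_of_all _ fun _ => by positivity),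
    integral_const_mul, integral_sqrt_sq_sub_sq_abs_add (hd.trans hdt) hdt]
  ring_nf

theorem volume_closedBall_single_inter_closedBall_neg_single {d t : ℝ} (hd : 0 ≤ d) (hdt : d ≤ t) :
    volume (closedBall (EuclideanSpace.single 0 d : EuclideanSpace ℝ (Fin 2)) t ∩
        closedBall (-EuclideanSpace.single 0 d) t)
      = ENNReal.ofReal (4 * ∫ u in d..t, √(t ^ 2 - u ^ 2)) := by
  have hφ : MeasurePreserving (MeasurableEquiv.finTwoArrow ∘ WithLp.ofLp
      (p := 2) (V := Fin 2 → ℝ)) volume volume :=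
    (volume_preserving_finTwoArrow ℝ).comp (PiLp.volume_preserving_ofLp (Fin 2))
  have hmem (c x : EuclideanSpace ℝ (Fin 2)) :
      x ∈ closedBall c t ↔ (x 0 - c 0) ^ 2 + (x 1 - c 1) ^ 2 ≤ t ^ 2 := by
    rw [mem_closedBall, ← sq_le_sq₀ dist_nonneg (hd.trans hdt), EuclideanSpace.dist_sq_eq,
      Fin.sum_univ_two, Real.dist_eq, Real.dist_eq, sq_abs, sq_abs]
  rw [← volume_lens_prod hd hdt, ← hφ.measure_preimage (by measurability)]
  congr 1
  ext x
  simp [hmem, sub_eq_add_neg]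

theorem volume_closedBall_inter_closedBall_eq_of_dist_eq {E : Type*} [NormedAddCommGroup E]
    [InnerProductSpace ℝ E] [FiniteDimensional ℝ E] [MeasurableSpace E] [BorelSpace E]
    {a b a' b' : E} (h : dist a b = dist a' b') (r s : ℝ) :
    volume (closedBall a r ∩ closedBall b s) = volume (closedBall a' r ∩ closedBall b' s) := by
  set R := Submodule.reflection (ℝ ∙ ((b - a) - (b' - a')))ᗮ
  have hR : R (b - a) = b' - a' := by
    apply Submodule.reflection_sub
    rwa [← dist_eq_norm', ← dist_eq_norm']
  let f : E → E := fun x => R (x - a) + a'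
  have hf : Isometry f := Isometry.of_dist_eq fun x y => by
    simp [f, dist_eq_norm, ← map_sub, R.norm_map]
  have hfa : f a = a' := by simp [f]
  have hfb : f b = b' := by simp only [f, hR, sub_add_cancel]
  have hmp : MeasurePreserving f volume volume :=
    (measurePreserving_add_right volume a').comp
      (R.measurePreserving.comp (measurePreserving_sub_right volume a))
  rw [← hf.preimage_closedBall a r, ← hf.preimage_closedBall b s, ← preimage_inter, hfa, hfb,
    hmp.measure_preimage (by measurability)]

theorem volume_closedBall_inter_closedBall_fin_two {a b : EuclideanSpace ℝ (Fin 2)} {t : ℝ}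
    (ht : dist a b / 2 ≤ t) :
    volume (closedBall a t ∩ closedBall b t)
      = ENNReal.ofReal (4 * ∫ u in dist a b / 2..t, √(t ^ 2 - u ^ 2)) := by
  set d := dist a b / 2
  have hd : 0 ≤ d := by positivity
  have hmodel :
      dist a b = dist (EuclideanSpace.single (0 : Fin 2) d) (-EuclideanSpace.single 0 d) := by
    conv_rhs => rw [dist_eq_norm, sub_neg_eq_add, ← two_smul ℝ, norm_smul, PiLp.norm_single,
      Real.norm_of_nonneg hd, Real.norm_two]
    ring
  rw [volume_closedBall_inter_closedBall_eq_of_dist_eq hmodel,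
    volume_closedBall_single_inter_closedBall_neg_single hd ht]

theorem closedBall_inter_closedBall_subset_closedBall_midpoint {V P : Type*}
    [NormedAddCommGroup V] [InnerProductSpace ℝ V] [MetricSpace P] [NormedAddTorsor V P]
    (a b : P) (t : ℝ) :
    closedBall a t ∩ closedBall b t ⊆
      closedBall (midpoint ℝ a b) √(t ^ 2 - (dist a b / 2) ^ 2) := by
  rintro x ⟨ha, hb⟩
  rw [mem_closedBall] at ha hb ⊢
  have hapollonius :=
    EuclideanGeometry.dist_sq_add_dist_sq_eq_two_mul_dist_midpoint_sq_add_half_dist_sq x a b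
  have ha2 := pow_le_pow_left₀ dist_nonneg ha 2
  have hb2 := pow_le_pow_left₀ dist_nonneg hb 2
  exact le_sqrt_of_sq_le (by linarith)

theorem setOf_annulus_lt_max_norm_eq_closedBall_diff_inter {E : Type*} [SeminormedAddCommGroup E]
    {xs xd w : E} {d ψ τ t : ℝ} (hs : ‖xs - w‖ ≤ d) (hd : ‖xd - w‖ ≤ d) (ht : ψ + d ≤ t) :
    {x | ψ ≤ ‖x - w‖ ∧ ‖x - w‖ ≤ τ ∧ t < max ‖xs - x‖ ‖x - xd‖}
      = closedBall w τ \ (closedBall xs t ∩ closedBall xd t) := by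
  ext x
  simp only [mem_ofPred_eq, mem_sdiff, mem_inter_iff, mem_closedBall, dist_eq_norm,
    norm_sub_rev x xs, ← not_le, max_le_iff]
  refine ⟨fun h => ⟨h.2.1, h.2.2⟩, fun h => ⟨?_, h⟩⟩
  have hxs := norm_sub_le_norm_sub_add_norm_sub xs w x
  have hxd := norm_sub_le_norm_sub_add_norm_sub x w xd
  rw [norm_sub_rev w x] at hxs
  rw [norm_sub_rev w xd] at hxd
  by_contra! hψ
  exact h.2 ⟨by linarith, by linarith⟩

theorem annulus_exceedance_measure_general (xs xd w : EuclideanSpace ℝ (Fin 2)) (d : ℝ)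
    (hw : w = midpoint ℝ xs xd) (hd : d = ‖xs - w‖)
    (ψ τ t : ℝ) (hτ : 0 < τ) (hdt : d < t)
    (ht₁ : ψ + d ≤ t) (ht₂ : t ≤ Real.sqrt (τ ^ 2 + d ^ 2)) :
    volume {x : EuclideanSpace ℝ (Fin 2) |
        ψ ≤ ‖x - w‖ ∧ ‖x - w‖ ≤ τ ∧ t < max ‖xs - x‖ ‖x - xd‖}
      = ENNReal.ofReal (π * (τ ^ 2 - t ^ 2) + 2 * d * Real.sqrt (t ^ 2 - d ^ 2)
          + 2 * t ^ 2 * Real.arctan (d / Real.sqrt (t ^ 2 - d ^ 2))) := by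
  have hd0 : 0 ≤ d := hd ▸ norm_nonneg _
  have ht : 0 < t := hd0.trans_lt hdt
  have hhalf : dist xs xd / 2 = d := by
    rw [hd, ← dist_eq_norm, hw, dist_left_midpoint]
    simp [div_eq_inv_mul]
  have hxd : ‖xd - w‖ = d := by
    rw [← dist_eq_norm, hw, dist_right_midpoint, ← hhalf]
    simp [div_eq_inv_mul]
  have hlens : closedBall xs t ∩ closedBall xd t ⊆ closedBall w τ := by
    refine (closedBall_inter_closedBall_subset_closedBall_midpoint xs xd t).trans
      (hw ▸ closedBall_subset_closedBall ?_)
    rw [hhalf, sqrt_le_left hτ.le]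
    linarith [(le_sqrt ht.le (by positivity)).1 ht₂]
  have hlens_area : 0 ≤ 4 * ∫ u in d..t, √(t ^ 2 - u ^ 2) :=
    mul_nonneg zero_le_four (intervalIntegral.integral_nonneg hdt.le fun _ _ => sqrt_nonneg _)
  rw [setOf_annulus_lt_max_norm_eq_closedBall_diff_inter hd.ge hxd.le ht₁,
    measure_sdiff hlens (by measurability)
      ((measure_mono hlens).trans_lt measure_closedBall_lt_top).ne,
    EuclideanSpace.volume_closedBall_fin_two,
    volume_closedBall_inter_closedBall_fin_two (hhalf.trans_le hdt.le), hhalf,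
    ← ENNReal.ofReal_pow hτ.le, ← ENNReal.ofReal_mul (by positivity),
    ← ENNReal.ofReal_sub _ hlens_area, integral_sqrt_sq_sub_sq ht (by linarith) hdt.le,
    arcsin_div_eq_arctan_div_sqrt (by rwa [abs_of_nonneg hd0])]
  ring_nf

/-- Measure of the portion of the annulus `D(ψ, τ) = {x : ψ ≤ ‖x − w‖ ≤ τ}` where the
relay selection function exceeds `t`: for `ψ ≥ 0`, `τ > 0`, `d < t`, `ψ + d ≤ t` and
`t ≤ √(τ² + d²)`, its two-dimensional Lebesgue measure equals
`π(τ² − t²) + 2d√(t² − d²) + 2t² arctan (d / √(t² − d²))`. -/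
theorem annulus_exceedance_measure (xs xd w : EuclideanSpace ℝ (Fin 2)) (d : ℝ)
    (hw : w = midpoint ℝ xs xd) (hd : d = ‖xs - w‖) (hdpos : 0 < d)
    (ψ τ t : ℝ) (hψ : 0 ≤ ψ) (hτ : 0 < τ) (hdt : d < t)
    (ht₁ : ψ + d ≤ t) (ht₂ : t ≤ Real.sqrt (τ ^ 2 + d ^ 2)) :
    volume {x : EuclideanSpace ℝ (Fin 2) |
        ψ ≤ ‖x - w‖ ∧ ‖x - w‖ ≤ τ ∧ t < max ‖xs - x‖ ‖x - xd‖}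
      = ENNReal.ofReal (π * (τ ^ 2 - t ^ 2) + 2 * d * Real.sqrt (t ^ 2 - d ^ 2)
          + 2 * t ^ 2 * Real.arctan (d / Real.sqrt (t ^ 2 - d ^ 2))) :=
  annulus_exceedance_measure_general xs xd w d hw hd ψ τ t hτ hdt ht₁ ht₂
end

section
/- For every real ρ > 0 there exists a unique real s > 0 satisfying (1/(2·ln 2)) · e^{1/s} · E₁(1/s) = ρ, where E₁(x) = ∫_1^∞ e^{−t x}/t dt. (This is the unique threshold s⋆ appearing in the outage probability of the optimum relay selection policy under Rayleigh fading.) -/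
open Real MeasureTheory Set Filter Topology

/-!
Write `f x = e^x E₁(x) = ∫_{t > 1} e^{(1 - t) x} / t dt`, so that the equation reads
`f (1 / s) = 2 ρ ln 2`. On `(0, ∞)` the function `f` is continuous (dominated convergence) and
strictly decreasing (the integrand is), with `0 ≤ f x ≤ 1 / x` and, restricting the integral to
`1 < t ≤ 1 + 1 / x` where `e^{(1 - t) x} ≥ e^{-1}`, `f x ≥ e^{-1} ln (1 + 1 / x)`. So `f`
decreases from `+∞` to `0` and takes every positive value exactly once.
-/

theorem setIntegral_lt_setIntegral_of_forall_lt {α : Type*} [MeasurableSpace α] {μ : Measure α}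
    {f g : α → ℝ} {s : Set α} (hs : MeasurableSet s) (hμs : μ s ≠ 0)
    (hf : IntegrableOn f s μ) (hg : IntegrableOn g s μ) (hlt : ∀ x ∈ s, f x < g x) :
    ∫ x in s, f x ∂μ < ∫ x in s, g x ∂μ := by
  rw [← sub_pos, ← integral_sub hg hf, setIntegral_pos_iff_support_of_nonneg_ae]
  · refine (pos_iff_ne_zero.2 hμs).trans_le (measure_mono fun x hx => ⟨?_, hx⟩)
    exact (sub_pos.2 (hlt x hx)).ne'
  · filter_upwards [ae_restrict_mem hs] with x hx
    exact (sub_pos.2 (hlt x hx)).le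
  · exact hg.sub hf

theorem StrictAntiOn.existsUnique_eq_of_tendsto {f : ℝ → ℝ} {a l y : ℝ}
    (hcont : ContinuousOn f (Ioi a)) (hanti : StrictAntiOn f (Ioi a))
    (hleft : Tendsto f (𝓝[>] a) atTop) (hright : Tendsto f atTop (𝓝 l)) (hy : l < y) :
    ∃! x, a < x ∧ f x = y := by
  obtain ⟨b, hfb, hb⟩ := ((hleft.eventually_gt_atTop y).and self_mem_nhdsWithin).exists
  obtain ⟨c, hfc, hbc⟩ :=
    ((hright.eventually (gt_mem_nhds hy)).and (eventually_gt_atTop b)).exists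
  have hIcc : Icc b c ⊆ Ioi a := fun x hx => lt_of_lt_of_le hb hx.1
  obtain ⟨x, hx, rfl⟩ :=
    intermediate_value_Icc' hbc.le (hcont.mono hIcc) ⟨hfc.le, hfb.le⟩
  exact ⟨x, ⟨hIcc hx, rfl⟩, fun z ⟨hz, hfz⟩ => hanti.injOn hz (hIcc hx) hfz⟩

theorem exp_one_sub_mul_eq (t x : ℝ) : exp ((1 - t) * x) = exp (-x * t) * exp x := by
  rw [← exp_add]; ring_nf

theorem integrableOn_exp_one_sub_mul_Ioi {x : ℝ} (hx : 0 < x) :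
    IntegrableOn (fun t : ℝ => exp ((1 - t) * x)) (Ioi 1) := by
  simp_rw [exp_one_sub_mul_eq]
  exact (integrableOn_exp_mul_Ioi (neg_lt_zero.2 hx) 1).mul_const _

theorem integral_exp_one_sub_mul_Ioi {x : ℝ} (hx : 0 < x) :
    ∫ t in Ioi (1 : ℝ), exp ((1 - t) * x) = x⁻¹ := by
  simp_rw [exp_one_sub_mul_eq]
  rw [integral_mul_const, integral_exp_mul_Ioi (neg_lt_zero.2 hx), mul_one, neg_div_neg_eq,
    div_mul_eq_mul_div, ← exp_add, neg_add_cancel, exp_zero, one_div]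

noncomputable def expMulE1 (x : ℝ) : ℝ := ∫ t in Ioi (1 : ℝ), exp ((1 - t) * x) / t

theorem exp_mul_integral_exp_neg_mul_div (x : ℝ) :
    exp x * ∫ t in Ioi (1 : ℝ), exp (-(t * x)) / t = expMulE1 x := by
  rw [expMulE1, ← integral_const_mul]
  congr 1 with t
  rw [← mul_div_assoc, ← exp_add]
  ring_nf

theorem exp_one_sub_mul_div_le {t : ℝ} (ht : 1 ≤ t) (x : ℝ) :
    exp ((1 - t) * x) / t ≤ exp ((1 - t) * x) :=
  div_le_self (exp_pos _).le ht

theorem integrableOn_exp_one_sub_mul_div_Ioi {x : ℝ} (hx : 0 < x) :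
    IntegrableOn (fun t : ℝ => exp ((1 - t) * x) / t) (Ioi 1) := by
  refine (integrableOn_exp_one_sub_mul_Ioi hx).mono'
    (by fun_prop : Measurable fun t : ℝ => exp ((1 - t) * x) / t).aestronglyMeasurable ?_
  filter_upwards [ae_restrict_mem measurableSet_Ioi] with t (ht : 1 < t)
  rw [norm_of_nonneg (div_nonneg (exp_pos _).le (zero_le_one.trans ht.le))]
  exact exp_one_sub_mul_div_le ht.le x

theorem expMulE1_nonneg (x : ℝ) : 0 ≤ expMulE1 x :=
  setIntegral_nonneg measurableSet_Ioi fun t (ht : 1 < t) => by positivity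

theorem expMulE1_le_inv {x : ℝ} (hx : 0 < x) : expMulE1 x ≤ x⁻¹ :=
  integral_exp_one_sub_mul_Ioi hx ▸ setIntegral_mono_on (integrableOn_exp_one_sub_mul_div_Ioi hx)
    (integrableOn_exp_one_sub_mul_Ioi hx) measurableSet_Ioi
    fun _ ht => exp_one_sub_mul_div_le (le_of_lt ht) x

theorem expMulE1_strictAntiOn : StrictAntiOn expMulE1 (Ioi 0) := by
  intro x (hx : 0 < x) y (hy : 0 < y) hxy
  refine setIntegral_lt_setIntegral_of_forall_lt measurableSet_Ioi (by simp)
    (integrableOn_exp_one_sub_mul_div_Ioi hy) (integrableOn_exp_one_sub_mul_div_Ioi hx)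
    fun t (ht : 1 < t) => div_lt_div_of_pos_right (exp_lt_exp.2 (by nlinarith)) (by linarith)

theorem continuousOn_expMulE1 : ContinuousOn expMulE1 (Ioi 0) := by
  refine fun x₀ (hx₀ : 0 < x₀) => ContinuousAt.continuousWithinAt ?_
  refine continuousAt_of_dominated (bound := fun t => exp ((1 - t) * (x₀ / 2)))
    (Eventually.of_forall fun x =>
      (by fun_prop : Measurable fun t : ℝ => exp ((1 - t) * x) / t).aestronglyMeasurable) ?_
    (integrableOn_exp_one_sub_mul_Ioi (half_pos hx₀)) ?_
  · filter_upwards [Ioi_mem_nhds (half_lt_self hx₀)] with x (hx : x₀ / 2 < x)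
    filter_upwards [ae_restrict_mem measurableSet_Ioi] with t (ht : 1 < t)
    rw [norm_of_nonneg (div_nonneg (exp_pos _).le (zero_le_one.trans ht.le))]
    refine (exp_one_sub_mul_div_le ht.le x).trans (exp_le_exp.2 ?_)
    nlinarith
  · filter_upwards [ae_restrict_mem measurableSet_Ioi] with t (ht : 1 < t)
    exact (continuous_exp.comp (by fun_prop)).continuousAt.div_const _

theorem tendsto_expMulE1_atTop : Tendsto expMulE1 atTop (𝓝 0) :=
  tendsto_of_tendsto_of_tendsto_of_le_of_le' tendsto_const_nhds
    tendsto_inv_atTop_zero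
    (Eventually.of_forall expMulE1_nonneg) ((eventually_gt_atTop 0).mono fun _ => expMulE1_le_inv)

theorem exp_neg_one_mul_log_le_expMulE1 {x : ℝ} (hx : 0 < x) :
    exp (-1) * log (1 + x⁻¹) ≤ expMulE1 x := by
  have hb : 1 ≤ 1 + x⁻¹ := le_add_of_nonneg_right (inv_pos.2 hx).le
  calc exp (-1) * log (1 + x⁻¹) = ∫ t in Ioc 1 (1 + x⁻¹), exp (-1) / t := by
        rw [← intervalIntegral.integral_of_le hb]
        simp_rw [div_eq_mul_inv]
        rw [intervalIntegral.integral_const_mul, integral_inv, div_one]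
        exact fun h0 => not_le.2 zero_lt_one (uIcc_of_le hb ▸ h0).1
    _ ≤ ∫ t in Ioc 1 (1 + x⁻¹), exp ((1 - t) * x) / t := by
        refine setIntegral_mono_on ?_ ((integrableOn_exp_one_sub_mul_div_Ioi hx).mono_set
          Ioc_subset_Ioi_self) measurableSet_Ioc fun t ht => ?_
        · refine (ContinuousOn.integrableOn_Icc ?_).mono_set Ioc_subset_Icc_self
          exact continuousOn_const.div continuousOn_id fun t ht => (zero_lt_one.trans_le ht.1).ne'
        · have : (t - 1) * x ≤ 1 := calc
            (t - 1) * x ≤ x⁻¹ * x := mul_le_mul_of_nonneg_right (by linarith [ht.2]) hx.le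
            _ = 1 := inv_mul_cancel₀ hx.ne'
          exact div_le_div_of_nonneg_right (exp_le_exp.2 (by linarith)) (zero_lt_one.trans ht.1).le
    _ ≤ expMulE1 x :=
        setIntegral_mono_set (integrableOn_exp_one_sub_mul_div_Ioi hx)
          ((ae_restrict_mem measurableSet_Ioi).mono fun t (ht : 1 < t) => by positivity)
          Ioc_subset_Ioi_self.eventuallyLE

theorem tendsto_expMulE1_nhdsGT_zero : Tendsto expMulE1 (𝓝[>] 0) atTop :=
  tendsto_atTop_mono' _ (eventually_mem_nhdsWithin.mono fun _ => exp_neg_one_mul_log_le_expMulE1)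
    (Tendsto.const_mul_atTop (exp_pos _)
      (tendsto_log_atTop.comp (tendsto_atTop_add_const_left _ 1 tendsto_inv_nhdsGT_zero)))

theorem expMulE1_existsUnique_eq {y : ℝ} (hy : 0 < y) : ∃! x, 0 < x ∧ expMulE1 x = y :=
  expMulE1_strictAntiOn.existsUnique_eq_of_tendsto continuousOn_expMulE1
    tendsto_expMulE1_nhdsGT_zero tendsto_expMulE1_atTop hy

/-- Existence and uniqueness of the outage threshold `s⋆`: for every `ρ > 0` there is a
unique `s > 0` with `(1/(2 ln 2)) e^{1/s} E₁(1/s) = ρ`, where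
`E₁(x) = ∫₁^∞ e^{−tx}/t dt`. -/
theorem outage_threshold_exists_unique (ρ : ℝ) (hρ : 0 < ρ) :
    ∃! s : ℝ, 0 < s ∧
      (1 / (2 * Real.log 2)) * Real.exp (1 / s) *
          (∫ t in Set.Ioi (1:ℝ), Real.exp (-(t * (1 / s))) / t) = ρ := by
  have hc : 0 < 2 * log 2 := by positivity
  have key (s : ℝ) : 1 / (2 * log 2) * exp (1 / s) *
      (∫ t in Ioi (1 : ℝ), exp (-(t * (1 / s))) / t) = ρ ↔
        expMulE1 (1 / s) = 2 * log 2 * ρ := by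
    rw [mul_assoc, exp_mul_integral_exp_neg_mul_div, one_div_mul_eq_div, div_eq_iff hc.ne',
      mul_comm ρ]
  simp only [key]
  obtain ⟨x, ⟨hx, hfx⟩, huniq⟩ := expMulE1_existsUnique_eq (mul_pos hc hρ)
  refine ⟨1 / x, ⟨one_div_pos.2 hx, by rwa [one_div_one_div]⟩, fun s ⟨hs, hfs⟩ => ?_⟩
  rw [← huniq (1 / s) ⟨one_div_pos.2 hs, hfs⟩, one_div_one_div]
end
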